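/- Let p be a prime and let 1 → N → G → Q → 1 be a short exact sequence of groups such that N is topologically p-embedded in G. If the p-residual of N and the p-residual of Q are both p′-groups, then the p-residual of G is a p′-group. -/

import Mathlib

/-!
Common definitions for formalizing "Cohomology and profinite topologies for solvable
groups of finite rank" (K. Lorensen).

Group cohomology is defined via inhomogeneous cochains.  The continuous cohomology of the
pro-`p` (resp. profinite) completion of `G` with coefficients in a finite discrete module is
the direct limit, over the normal subgroups `N` of finite `p`-power (resp. finite) index
acting trivially on the module, of the cohomology of the quotients `G ⧸ N`; accordingly, the
statement that the completion map induces an isomorphism on cohomology is rendered as: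
the canonical (inflation) maps from this directed system to `H^*(G, M)` are jointly
surjective, and any class of the system killed in `H^*(G, M)` is killed at a deeper level of
the system.
-/

open Function TensorProduct

universe u v

namespace GoodProfinite

variable {G H : Type u} {M : Type v}

/-- The multiplicative group structure on `AddAut A` (composition), as in older Mathlib, where
`AddAut A` was a multiplicative group; current Mathlib makes it an additive group. -/
instance addAutGroupOld {A : Type*} [Add A] : Group (AddAut A) where
  mul g h := AddEquiv.trans h g
  one := AddEquiv.refl _
  inv := AddEquiv.symm
  mul_assoc _ _ _ := rfl
  one_mul _ := rfl
  mul_one _ := rfl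
  inv_mul_cancel := AddEquiv.self_trans_symm

/-- The differential on inhomogeneous cochains of a group `G` with coefficients in a
`G`-module `M` (the action given by `ρ : G →* AddAut M`). -/
def cochainD [Group G] [AddCommGroup M] (ρ : G →* AddAut M) (n : ℕ) :
    ((Fin n → G) → M) →+ ((Fin (n + 1) → G) → M) :=
  AddMonoidHom.mk'
    (fun f g =>
      ρ (g 0) (f fun i => g i.succ) +
        ∑ j : Fin (n + 1), (-1 : ℤ) ^ ((j : ℕ) + 1) • f (Fin.contractNth j (· * ·) g))
    (by
      intro a b
      funext g
      simp only [Pi.add_apply, map_add, smul_add, Finset.sum_add_distrib]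
      abel)

/-- The `n`-cocycles. -/
def cocycleGroup [Group G] [AddCommGroup M] (ρ : G →* AddAut M) (n : ℕ) :
    AddSubgroup ((Fin n → G) → M) :=
  (cochainD ρ n).ker

/-- The `n`-coboundaries. -/
def coboundaryGroup [Group G] [AddCommGroup M] (ρ : G →* AddAut M) :
    (n : ℕ) → AddSubgroup ((Fin n → G) → M)
  | 0 => ⊥
  | n + 1 => (cochainD ρ n).range

/-- The `n`-th group cohomology of `G` with coefficients in the `G`-module `M`. -/
def groupCoh [Group G] [AddCommGroup M] (ρ : G →* AddAut M) (n : ℕ) : Type (max u v) :=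
  cocycleGroup ρ n ⧸ (coboundaryGroup ρ n).addSubgroupOf (cocycleGroup ρ n)

instance [Group G] [AddCommGroup M] (ρ : G →* AddAut M) (n : ℕ) :
    AddCommGroup (groupCoh ρ n) :=
  inferInstanceAs (AddCommGroup (_ ⧸ _))

/-- Precomposition of cochains with a group homomorphism. -/
def precompCochain [Group G] [Group H] [AddCommGroup M] (f : G →* H) (n : ℕ) :
    ((Fin n → H) → M) →+ ((Fin n → G) → M) :=
  AddMonoidHom.mk' (fun c g => c fun i => f (g i)) (fun _ _ => rfl)

lemma comp_contractNth [Group G] [Group H] (f : G →* H) {n : ℕ} (j : Fin (n + 1))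
    (g : Fin (n + 1) → G) :
    (fun k => f (Fin.contractNth j (· * ·) g k)) =
      Fin.contractNth j (· * ·) fun i => f (g i) := by
  funext k
  unfold Fin.contractNth
  split_ifs <;> simp [map_mul]

lemma cochainD_precomp [Group G] [Group H] [AddCommGroup M] (f : G →* H)
    (ρ : H →* AddAut M) (ρ' : G →* AddAut M) (hcomp : ∀ g, ρ' g = ρ (f g)) (n : ℕ)
    (c : (Fin n → H) → M) :
    cochainD ρ' n (precompCochain f n c) = precompCochain f (n + 1) (cochainD ρ n c) := by
  funext g
  show ρ' (g 0) (c fun i => f (g i.succ)) +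
      ∑ j : Fin (n + 1), (-1 : ℤ) ^ ((j : ℕ) + 1) •
        c (fun i => f (Fin.contractNth j (· * ·) g i)) =
    ρ (f (g 0)) (c fun i => f (g i.succ)) +
      ∑ j : Fin (n + 1), (-1 : ℤ) ^ ((j : ℕ) + 1) •
        c (Fin.contractNth j (· * ·) fun i => f (g i))
  rw [hcomp]
  congr 1
  refine Finset.sum_congr rfl fun j _ => ?_
  rw [comp_contractNth]

/-- The map on cocycles induced by a group homomorphism with compatible actions. -/
def cocycleMap [Group G] [Group H] [AddCommGroup M] (f : G →* H) (ρ : H →* AddAut M)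
    (ρ' : G →* AddAut M) (hcomp : ∀ g, ρ' g = ρ (f g)) (n : ℕ) :
    cocycleGroup ρ n →+ cocycleGroup ρ' n :=
  AddMonoidHom.codRestrict ((precompCochain f n).comp (cocycleGroup ρ n).subtype) _
    (fun x => by
      have hx : cochainD ρ n x.1 = 0 := x.2
      show precompCochain f n x.1 ∈ (cochainD ρ' n).ker
      rw [AddMonoidHom.mem_ker, cochainD_precomp f ρ ρ' hcomp, hx, map_zero])

/-- The map `H^n(H, M) → H^n(G, M)` on group cohomology induced by a group homomorphism
`f : G →* H` and compatible actions (`ρ' = ρ ∘ f`); e.g. inflation maps. -/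
def cohMap [Group G] [Group H] [AddCommGroup M] (f : G →* H) (ρ : H →* AddAut M)
    (ρ' : G →* AddAut M) (hcomp : ∀ g, ρ' g = ρ (f g)) (n : ℕ) :
    groupCoh ρ n →+ groupCoh ρ' n :=
  QuotientAddGroup.map _ _ (cocycleMap f ρ ρ' hcomp n)
    (by
      intro x hx
      rw [AddSubgroup.mem_addSubgroupOf] at hx
      rw [AddSubgroup.mem_comap, AddSubgroup.mem_addSubgroupOf]
      match n, x, hx with
      | 0, x, hx =>
          have : x.1 = 0 := hx
          show (precompCochain f 0) x.1 ∈ (⊥ : AddSubgroup _)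
          rw [this, map_zero]
          exact AddSubgroup.mem_bot.mpr rfl
      | (m + 1), x, hx =>
          obtain ⟨b, hb⟩ := hx
          show (precompCochain f (m + 1)) x.1 ∈ (cochainD ρ' m).range
          exact ⟨precompCochain f m b, by rw [cochainD_precomp f ρ ρ' hcomp, hb]⟩)

/-- The action of `G ⧸ N` on `M` induced by an action of `G` on which `N` acts trivially. -/
def quotAut [Group G] [AddCommGroup M] (ρ : G →* AddAut M) (N : Subgroup G) [N.Normal]
    (h : ∀ x ∈ N, ρ x = 1) : G ⧸ N →* AddAut M :=
  QuotientGroup.lift N ρ h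

/-- The natural projection `G ⧸ N' →* G ⧸ N` when `N' ≤ N`. -/
def quotMapHom [Group G] (N N' : Subgroup G) [N.Normal] [N'.Normal] (hle : N' ≤ N) :
    G ⧸ N' →* G ⧸ N :=
  QuotientGroup.map N' N (MonoidHom.id G) fun _ hx => hle hx

lemma quotAut_comp_quotMap [Group G] [AddCommGroup M] (ρ : G →* AddAut M)
    (N N' : Subgroup G) [N.Normal] [N'.Normal] (hle : N' ≤ N) (h : ∀ x ∈ N, ρ x = 1) :
    ∀ x : G ⧸ N', quotAut ρ N' (fun g hg => h g (hle hg)) x =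
      quotAut ρ N h (quotMapHom N N' hle x) := fun x =>
  QuotientGroup.induction_on x fun _ => rfl

/-- The canonical map from the continuous cohomology of the pro-`p` completion of `G`
(the direct limit over normal subgroups of finite `p`-power index acting trivially on `M`
of the cohomology of the corresponding quotients) to `H^*(G, M)` is an isomorphism in
every degree. -/
def ProPCompletionCohIso (p : ℕ) (G : Type u) [Group G] (M : Type v) [AddCommGroup M]
    (ρ : G →* AddAut M) : Prop :=
  ∀ n : ℕ,
    (∀ x : groupCoh ρ n,
      ∃ (N : Subgroup G) (hN : N.Normal),
        haveI := hN
        ∃ (_ : ∃ k, N.index = p ^ k) (h1 : ∀ y ∈ N, ρ y = 1)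
          (z : groupCoh (quotAut ρ N h1) n),
          cohMap (QuotientGroup.mk' N) (quotAut ρ N h1) ρ (fun _ => rfl) n z = x) ∧
    (∀ (N : Subgroup G) (hN : N.Normal),
      haveI := hN
      ∀ (_ : ∃ k, N.index = p ^ k) (h1 : ∀ y ∈ N, ρ y = 1)
        (z : groupCoh (quotAut ρ N h1) n),
        cohMap (QuotientGroup.mk' N) (quotAut ρ N h1) ρ (fun _ => rfl) n z = 0 →
        ∃ (N' : Subgroup G) (hN' : N'.Normal),
          haveI := hN'
          ∃ (_ : ∃ k, N'.index = p ^ k) (hle : N' ≤ N),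
            cohMap (quotMapHom N N' hle) (quotAut ρ N h1)
              (quotAut ρ N' fun g hg => h1 g (hle hg))
              (quotAut_comp_quotMap ρ N N' hle h1) n z = 0)

/-- The analogue of `ProPCompletionCohIso` for the full profinite completion: the canonical
map from the continuous cohomology of the profinite completion of `G` to `H^*(G, M)` is an
isomorphism in every degree. -/
def ProfiniteCompletionCohIso (G : Type u) [Group G] (M : Type v) [AddCommGroup M]
    (ρ : G →* AddAut M) : Prop :=
  ∀ n : ℕ,
    (∀ x : groupCoh ρ n,
      ∃ (N : Subgroup G) (hN : N.Normal),
        haveI := hN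
        ∃ (_ : N.FiniteIndex) (h1 : ∀ y ∈ N, ρ y = 1)
          (z : groupCoh (quotAut ρ N h1) n),
          cohMap (QuotientGroup.mk' N) (quotAut ρ N h1) ρ (fun _ => rfl) n z = x) ∧
    (∀ (N : Subgroup G) (hN : N.Normal),
      haveI := hN
      ∀ (_ : N.FiniteIndex) (h1 : ∀ y ∈ N, ρ y = 1)
        (z : groupCoh (quotAut ρ N h1) n),
        cohMap (QuotientGroup.mk' N) (quotAut ρ N h1) ρ (fun _ => rfl) n z = 0 →
        ∃ (N' : Subgroup G) (hN' : N'.Normal),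
          haveI := hN'
          ∃ (_ : N'.FiniteIndex) (hle : N' ≤ N),
            cohMap (quotMapHom N N' hle) (quotAut ρ N h1)
              (quotAut ρ N' fun g hg => h1 g (hle hg))
              (quotAut_comp_quotMap ρ N N' hle h1) n z = 0)

/-- The class `𝒢(p)`: the pro-`p` completion map `G → Ĝ_p` induces an isomorphism
`H^*(Ĝ_p, M) → H^*(G, M)` for every discrete `Ĝ_p`-module `M` of finite `p`-power order,
i.e. for every `G`-module `M` of finite `p`-power order whose action factors through a
quotient of finite `p`-power index. -/
def InGp (p : ℕ) (G : Type u) [Group G] : Prop :=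
  ∀ (M : Type u) [AddCommGroup M] (ρ : G →* AddAut M),
    (∃ k, Nat.card M = p ^ k) →
    (∃ N : Subgroup G, N.Normal ∧ (∃ k, N.index = p ^ k) ∧ ∀ y ∈ N, ρ y = 1) →
    ProPCompletionCohIso p G M ρ

/-- The class `𝒢*(p)`: the profinite completion map `G → Ĝ` induces an isomorphism
`H^*(Ĝ, M) → H^*(G, M)` for every discrete `Ĝ`-module `M` of finite `p`-power order,
i.e. for every `G`-module `M` of finite `p`-power order whose action factors through a
quotient of finite index. -/
def InGpStar (p : ℕ) (G : Type u) [Group G] : Prop :=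
  ∀ (M : Type u) [AddCommGroup M] (ρ : G →* AddAut M),
    (∃ k, Nat.card M = p ^ k) →
    (∃ N : Subgroup G, N.Normal ∧ N.FiniteIndex ∧ ∀ y ∈ N, ρ y = 1) →
    ProfiniteCompletionCohIso G M ρ

/-- The class `ℱ𝒮`: groups having only finitely many subgroups of each finite index. -/
def InFS (G : Type u) [Group G] : Prop :=
  ∀ n : ℕ, n ≠ 0 → {H : Subgroup G | H.index = n}.Finite

/-- The class `ℱℋ`: groups `G` such that `H^n(G, M)` is finite for every finite
`G`-module `M` and every `n ≥ 0`. -/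
def InFH (G : Type u) [Group G] : Prop :=
  ∀ (M : Type u) [AddCommGroup M] [Finite M] (ρ : G →* AddAut M) (n : ℕ),
    Finite (groupCoh ρ n)

/-- An abelian group has finite torsion-free rank iff `ℚ ⊗ A` is finite dimensional. -/
def HasFiniteTorsionFreeRank (A : Type v) [CommGroup A] : Prop :=
  Module.Finite ℚ (ℚ ⊗[ℤ] (Additive A))

/-- An abelian group has finite `p`-rank (its `p`-torsion subgroup is a direct sum of
finitely many cyclic and quasicyclic groups) iff its `p`-socle is finite. -/
def HasFinitePRank (p : ℕ) (A : Type v) [CommGroup A] : Prop :=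
  {a : A | a ^ p = 1}.Finite

/-- `G` has finite abelian section rank: every abelian section of `G` has finite
torsion-free rank and finite `p`-rank for every prime `p`. -/
def IsFAR (G : Type u) [Group G] : Prop :=
  ∀ (H : Subgroup G) (A : Type u) [CommGroup A] (φ : H →* A), Surjective φ →
    HasFiniteTorsionFreeRank A ∧ ∀ p : ℕ, p.Prime → HasFinitePRank p A

/-- The Prüfer `p`-group `C_{p^∞}`: the subgroup of `p`-power order elements of `ℚ/ℤ`. -/
def pruferSubgroup (p : ℕ) : AddSubgroup (AddCircle (1 : ℚ)) where
  carrier := {x | ∃ n : ℕ, p ^ n • x = 0}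
  zero_mem' := ⟨0, smul_zero _⟩
  add_mem' := by
    rintro a b ⟨m, hm⟩ ⟨n, hn⟩
    refine ⟨m + n, ?_⟩
    have ha : p ^ (m + n) • a = 0 := by rw [pow_add, mul_comm, mul_smul, hm, smul_zero]
    have hb : p ^ (m + n) • b = 0 := by rw [pow_add, mul_smul, hn, smul_zero]
    rw [smul_add, ha, hb, add_zero]
  neg_mem' := by
    rintro a ⟨m, hm⟩
    exact ⟨m, by rw [smul_neg, hm, neg_zero]⟩

/-- `G` has a subgroup isomorphic to the Prüfer `p`-group `C_{p^∞}`. -/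
def HasPruferSubgroup (p : ℕ) (G : Type u) [Group G] : Prop :=
  ∃ H : Subgroup G, Nonempty (H ≃* Multiplicative (pruferSubgroup p))

/-- `G` has a section (quotient of a subgroup) isomorphic to the Prüfer `p`-group, i.e.
`p ∈ spec G`. -/
def HasPruferSection (p : ℕ) (G : Type u) [Group G] : Prop :=
  ∃ (H : Subgroup G) (φ : H →* Multiplicative (pruferSubgroup p)), Surjective φ

/-- `H ≤_t G`: `H` is topologically embedded in `G`, i.e. the profinite topology of `G`
induces the full profinite topology on `H`. -/
def TopEmbedded {G : Type u} [Group G] (H : Subgroup G) : Prop :=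
  ∀ K : Subgroup H, K.Normal → K.FiniteIndex →
    ∃ L : Subgroup G, L.Normal ∧ L.FiniteIndex ∧ L.subgroupOf H ≤ K

/-- `H ≤_{t(p)} G`: `H` is topologically `p`-embedded in `G`, i.e. the pro-`p` topology of
`G` induces the full pro-`p` topology on `H`. -/
def TopPEmbedded (p : ℕ) {G : Type u} [Group G] (H : Subgroup G) : Prop :=
  ∀ K : Subgroup H, K.Normal → (∃ k, K.index = p ^ k) →
    ∃ L : Subgroup G, L.Normal ∧ (∃ k, L.index = p ^ k) ∧ L.subgroupOf H ≤ K

/-- The pro-`p` topology on `G` is homogeneous: every subgroup of `G` is topologically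
`p`-embedded in `G`. -/
def PHomogeneous (p : ℕ) (G : Type u) [Group G] : Prop :=
  ∀ H : Subgroup G, TopPEmbedded p H

/-- The `p`-residual of `G`: the kernel of the pro-`p` completion map, i.e. the
intersection of all normal subgroups of finite `p`-power index. -/
def pResidual (p : ℕ) (G : Type u) [Group G] : Subgroup G :=
  ⨅ (N : Subgroup G) (_ : N.Normal) (_ : ∃ k, N.index = p ^ k), N

/-- A `p'`-group: every element has finite order coprime to `p`. -/
def IsPPrimeGroup (p : ℕ) (G : Type u) [Group G] : Prop :=
  ∀ g : G, IsOfFinOrder g ∧ Nat.Coprime (orderOf g) p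

/-- The profinite topology on `G`, with the cosets of the normal subgroups of finite index
as basic open sets. -/
def profiniteTopology (G : Type u) [Group G] : TopologicalSpace G :=
  ⨅ (N : Subgroup G) (_ : N.Normal) (_ : N.FiniteIndex),
    TopologicalSpace.induced (QuotientGroup.mk (s := N)) ⊥

lemma normal_of_le_center {G : Type u} [Group G] {A : Subgroup G}
    (hA : A ≤ Subgroup.center G) : A.Normal :=
  ⟨fun a ha g => by
    have hc := (Subgroup.mem_center_iff.mp (hA ha)) g
    have : g * a * g⁻¹ = a := by rw [hc]; group
    rwa [this]⟩

/-!
The image of `g ∈ pResidual p G` in `Q` lies in the `p`-residual of `Q`, so it has some order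
`m` prime to `p`. Then `g ^ m` lies in `N`, and the topological `p`-embedding of `N` puts it in
the `p`-residual of `N`, so its order `k` is prime to `p` as well; hence the order of `g`
divides `m * k`, which is prime to `p`.
-/

section

variable {p : ℕ} [Group G] [Group H]

lemma mem_pResidual_iff {x : G} :
    x ∈ pResidual p G ↔ ∀ N : Subgroup G, N.Normal → (∃ k, N.index = p ^ k) → x ∈ N := by
  simp [pResidual, Subgroup.mem_iInf]

lemma isPPrimeGroup_subgroup_iff {S : Subgroup G} :
    IsPPrimeGroup p S ↔ ∀ x ∈ S, IsOfFinOrder x ∧ (orderOf x).Coprime p := by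
  simp only [IsPPrimeGroup, Subtype.forall, Subgroup.orderOf_mk,
    ← Subtype.coe_injective.isOfFinOrder_iff (f := S.subtype), S.coe_subtype]

lemma map_mem_pResidual_of_surjective {f : G →* H} (hf : Surjective f) {x : G}
    (hx : x ∈ pResidual p G) : f x ∈ pResidual p H := by
  refine mem_pResidual_iff.mpr fun K hK hKp => ?_
  refine mem_pResidual_iff.mp hx (K.comap f) (hK.comap f) ?_
  rwa [Subgroup.index_comap_of_surjective K hf]

lemma mem_pResidual_of_topPEmbedded {S : Subgroup G} (hS : TopPEmbedded p S) {x : S}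
    (hx : (x : G) ∈ pResidual p G) : x ∈ pResidual p S := by
  refine mem_pResidual_iff.mpr fun K hK hKp => ?_
  obtain ⟨L, hL, hLp, hLK⟩ := hS K hK hKp
  exact hLK (Subgroup.mem_subgroupOf.mpr (mem_pResidual_iff.mp hx L hL hLp))

lemma mem_pResidual_of_topPEmbedded_range {ι : H →* G} (hι : Injective ι)
    (htop : TopPEmbedded p ι.range) {n : H} (hn : ι n ∈ pResidual p G) :
    n ∈ pResidual p H := by
  let e : H ≃* ι.range := MonoidHom.ofInjective hι
  have he : e n ∈ pResidual p ι.range := mem_pResidual_of_topPEmbedded htop hn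
  simpa using map_mem_pResidual_of_surjective (f := e.symm.toMonoidHom) e.symm.surjective he

lemma isOfFinOrder_and_coprime_of_pow {g : G} {m : ℕ} (hm : m ≠ 0) (hmp : m.Coprime p)
    (hfin : IsOfFinOrder (g ^ m)) (hcop : (orderOf (g ^ m)).Coprime p) :
    IsOfFinOrder g ∧ (orderOf g).Coprime p := by
  refine ⟨(isOfFinOrder_pow.mp hfin).resolve_right hm, ?_⟩
  have hdvd : orderOf g ∣ m * orderOf (g ^ m) :=
    orderOf_dvd_of_pow_eq_one (by rw [pow_mul, pow_orderOf_eq_one])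
  exact (hmp.mul_left hcop).coprime_dvd_left hdvd

end

theorem pResidual_pPrime_extension_general (p : ℕ) (N G Q : Type u) [Group N]
    [Group G] [Group Q] (ι : N →* G) (π : G →* Q) (hι : Injective ι) (hπ : Surjective π)
    (hex : ι.range = π.ker) (htop : TopPEmbedded p ι.range)
    (hN : IsPPrimeGroup p ↥(pResidual p N)) (hQ : IsPPrimeGroup p ↥(pResidual p Q)) :
    IsPPrimeGroup p ↥(pResidual p G) := by
  rw [isPPrimeGroup_subgroup_iff] at hN hQ ⊢
  intro g hg
  obtain ⟨hπg_fin, hπg_cop⟩ := hQ (π g) (map_mem_pResidual_of_surjective hπ hg)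
  have hgm_ker : g ^ orderOf (π g) ∈ π.ker := by
    rw [MonoidHom.mem_ker, map_pow, pow_orderOf_eq_one]
  obtain ⟨n, hn⟩ : g ^ orderOf (π g) ∈ ι.range := hex ▸ hgm_ker
  have hn_res : n ∈ pResidual p N :=
    mem_pResidual_of_topPEmbedded_range hι htop (hn ▸ Subgroup.pow_mem _ hg _)
  obtain ⟨hn_fin, hn_cop⟩ := hN n hn_res
  refine isOfFinOrder_and_coprime_of_pow hπg_fin.orderOf_pos.ne' hπg_cop ?_ ?_
  · exact hn ▸ hι.isOfFinOrder_iff.mpr hn_fin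
  · rwa [← hn, orderOf_injective ι hι]

/-- Lemma 3.6: if `1 → N → G → Q → 1` is exact with `N ≤_{t(p)} G` and the `p`-residuals
of `N` and `Q` are `p'`-groups, then so is the `p`-residual of `G`. -/
theorem pResidual_pPrime_extension (p : ℕ) (hp : p.Prime) (N G Q : Type u) [Group N]
    [Group G] [Group Q] (ι : N →* G) (π : G →* Q) (hι : Injective ι) (hπ : Surjective π)
    (hex : ι.range = π.ker) (htop : TopPEmbedded p ι.range)
    (hN : IsPPrimeGroup p ↥(pResidual p N)) (hQ : IsPPrimeGroup p ↥(pResidual p Q)) :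
    IsPPrimeGroup p ↥(pResidual p G) :=
  pResidual_pPrime_extension_general p N G Q ι π hι hπ hex htop hN hQ

end GoodProfinite
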